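/- arXiv:dg-ga/9711020 — 2 statements merged into one kernel-verified Lean document; each statement's English description precedes it below -/
import Mathlib

section
/- Let V be a 3-dimensional real vector space with a Lorentzian form and A: V → V a linear operator. If A has at least 4 pairwise non-collinear isotropic eigenvectors, then A is a scalar multiple of the identity. -/
def IsLorentzForm {V : Type*} [AddCommGroup V] [Module ℝ V] (n : ℕ)
    (B : LinearMap.BilinForm ℝ V) : Prop :=
  ∃ b : Module.Basis (Fin n) ℝ V, ∀ i j, B (b i) (b j) =
    if i = j then (if (i : ℕ) = 0 then (-1 : ℝ) else 1) else 0

/-!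
Two independent isotropic vectors `u, v` of a Lorentz 3-space are never orthogonal: otherwise
`v₀ • u - u₀ • v` (with `u₀, v₀` the time coordinates) would be isotropic with vanishing time
coordinate, hence zero, as the form is positive definite on the space-like plane. For three
pairwise non-orthogonal isotropic vectors, pairing a linear relation with each of them gives a
system of determinant `2 B₀₁ B₀₂ B₁₂ ≠ 0`, so any three of the four eigenvectors are independent.
Thus `b 0, b 1, b 2` is an eigenbasis in which `b 3` has no vanishing coordinate, and comparing
coordinates in `A (b 3) = μ₃ • b 3` forces every eigenvalue to equal `μ₃`.
-/

open LinearMap (BilinForm)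

namespace Module.Basis

variable {ι K V : Type*} [Field K] [AddCommGroup V] [Module K V]

theorem repr_ne_zero_of_linearIndependent_update [DecidableEq ι] (f : Basis ι K V) {i : ι}
    {w : V} (h : LinearIndependent K (Function.update f i w)) : f.repr w i ≠ 0 := by
  intro hw
  refine linearIndependent_iff_notMem_span.mp h i ?_
  have himage : Function.update f i w '' (Set.univ \ {i}) = f '' (Set.univ \ {i}) :=
    Set.image_congr fun j hj => Function.update_of_ne hj.2 w f
  rw [himage, Function.update_self, f.mem_span_image]
  intro j hj
  exact ⟨trivial, fun hji => Finsupp.mem_support_iff.mp hj (hji ▸ hw)⟩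

theorem repr_apply_eigenvector (f : Basis ι K V) {A : Module.End K V} {μ : ι → K}
    (hf : ∀ i, A (f i) = μ i • f i) (v : V) (i : ι) : f.repr (A v) i = μ i * f.repr v i := by
  classical
  have : f.coord i ∘ₗ A = μ i • f.coord i := f.ext fun j => by
    by_cases hij : j = i
    · subst hij; simp [hf]
    · simp [hf, hij]
  exact LinearMap.congr_fun this v

theorem eq_smul_id_of_eigenvector_repr_ne_zero (f : Basis ι K V) {A : Module.End K V}
    {μ : ι → K} (hf : ∀ i, A (f i) = μ i • f i) {w : V} {c : K} (hw : A w = c • w)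
    (hrepr : ∀ i, f.repr w i ≠ 0) : A = c • LinearMap.id := by
  have hμ : ∀ i, μ i = c := fun i => mul_right_cancel₀ (hrepr i) <| by
    rw [← f.repr_apply_eigenvector hf, hw]; simp
  exact f.ext fun i => by simp [hf, hμ]

end Module.Basis

namespace LinearMap.BilinForm

variable {K V : Type*} [Field K] [NeZero (2 : K)] [AddCommGroup V] [Module K V]

theorem linearIndependent_of_isotropic_of_apply_ne_zero {B : BilinForm K V} (hB : B.IsSymm)
    (v : Fin 3 → V) (hiso : ∀ i, B (v i) (v i) = 0) (hne : ∀ i j, i ≠ j → B (v i) (v j) ≠ 0) :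
    LinearIndependent K v := by
  rw [Fintype.linearIndependent_iff]
  intro g hg i
  have hpair (j : Fin 3) : ∑ k, g k * B (v k) (v j) = 0 := by
    simpa using congrArg (fun x => B x (v j)) hg
  have h0 := hpair 0
  have h1 := hpair 1
  have h2 := hpair 2
  simp only [Fin.sum_univ_three, hiso, hB.eq (v 1) (v 0), hB.eq (v 2) (v 0),
    hB.eq (v 2) (v 1)] at h0 h1 h2
  set a := B (v 0) (v 1)
  set b := B (v 0) (v 2)
  set c := B (v 1) (v 2)
  have ha : a ≠ 0 := hne 0 1 (by decide)
  have hb : b ≠ 0 := hne 0 2 (by decide)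
  have hc : c ≠ 0 := hne 1 2 (by decide)
  have e0 : g 0 * (2 * a * b) = 0 := by linear_combination b * h1 + a * h2 - c * h0
  have e1 : g 1 * (2 * a * c) = 0 := by linear_combination c * h0 - b * h1 + a * h2
  have e2 : g 2 * (2 * b * c) = 0 := by linear_combination c * h0 + b * h1 - a * h2
  fin_cases i
  · simpa [ha, hb, two_ne_zero] using e0
  · simpa [ha, hc, two_ne_zero] using e1
  · simpa [hb, hc, two_ne_zero] using e2

end LinearMap.BilinForm

section Lorentz

variable {V : Type*} [AddCommGroup V] [Module ℝ V] {B : BilinForm ℝ V}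

theorem lorentz_apply_self {e : Module.Basis (Fin 3) ℝ V}
    (he : ∀ i j, B (e i) (e j) = if i = j then (if (i : ℕ) = 0 then (-1 : ℝ) else 1) else 0)
    (x : V) : B x x = -e.repr x 0 ^ 2 + e.repr x 1 ^ 2 + e.repr x 2 ^ 2 := by
  conv_lhs => rw [← e.sum_repr x]
  simp [-Module.Basis.sum_repr, Fin.sum_univ_three, he]
  ring

theorem lorentz_eq_zero_of_isotropic {e : Module.Basis (Fin 3) ℝ V}
    (he : ∀ i j, B (e i) (e j) = if i = j then (if (i : ℕ) = 0 then (-1 : ℝ) else 1) else 0)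
    {x : V} (hx : B x x = 0) (h0 : e.repr x 0 = 0) : x = 0 := by
  rw [lorentz_apply_self he, h0] at hx
  have h1 : e.repr x 1 = 0 := by nlinarith
  have h2 : e.repr x 2 = 0 := by nlinarith
  exact e.ext_elem fun i => by fin_cases i <;> simp [h0, h1, h2]

theorem IsLorentzForm.apply_ne_zero_of_isotropic (hL : IsLorentzForm 3 B) (hB : B.IsSymm)
    {u v : V} (hu : B u u = 0) (hv : B v v = 0) (huv : LinearIndependent ℝ ![u, v]) :
    B u v ≠ 0 := by
  obtain ⟨e, he⟩ := hL
  intro horth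
  have hu0 : e.repr u 0 ≠ 0 := fun h => huv.ne_zero 0 (lorentz_eq_zero_of_isotropic he hu h)
  set x := e.repr v 0 • u - e.repr u 0 • v
  have hx : x = 0 := lorentz_eq_zero_of_isotropic he
    (by simp [x, hu, hv, horth, hB.eq v u]) (by simp [x]; ring)
  have hrel := LinearIndependent.pair_iff.mp huv (e.repr v 0) (-e.repr u 0) (by rw [← hx]; module)
  exact hu0 (neg_eq_zero.mp hrel.2)

end Lorentz

theorem stmt4_general {V : Type*} [AddCommGroup V] [Module ℝ V]
    (B : LinearMap.BilinForm ℝ V) (hsymm : ∀ u v, B u v = B v u)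
    (hL : IsLorentzForm 3 B)
    (A : V →ₗ[ℝ] V)
    (b : Fin 4 → V) (mu : Fin 4 → ℝ)
    (hiso : ∀ i, B (b i) (b i) = 0)
    (heig : ∀ i, A (b i) = mu i • b i)
    (hnc : ∀ i j, i ≠ j → LinearIndependent ℝ ![b i, b j]) :
    ∃ c : ℝ, ∀ v : V, A v = c • v := by
  have hB : B.IsSymm := ⟨hsymm⟩
  have htriple (g : Fin 3 → Fin 4) (hg : g.Injective) : LinearIndependent ℝ (b ∘ g) :=
    BilinForm.linearIndependent_of_isotropic_of_apply_ne_zero hB _ (fun i => hiso (g i))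
      fun i j hij => hL.apply_ne_zero_of_isotropic hB (hiso _) (hiso _) (hnc _ _ (hg.ne hij))
  have hcard : Fintype.card (Fin 3) = Module.finrank ℝ V := by
    obtain ⟨e, -⟩ := hL
    simp [Module.finrank_eq_card_basis e]
  let f := basisOfLinearIndependentOfCardEqFinrank (htriple _ (Fin.castSucc_injective 3)) hcard
  have hf : ∀ i, A (f i) = mu i.castSucc • f i := by
    simp [f, coe_basisOfLinearIndependentOfCardEqFinrank, heig]
  have hrepr (i : Fin 3) : f.repr (b 3) i ≠ 0 := by
    have hinj : (Function.update Fin.castSucc i 3).Injective := by revert i; decide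
    refine f.repr_ne_zero_of_linearIndependent_update ?_
    simpa [f, coe_basisOfLinearIndependentOfCardEqFinrank, Function.comp_update]
      using htriple _ hinj
  exact ⟨mu 3, LinearMap.congr_fun (f.eq_smul_id_of_eigenvector_repr_ne_zero hf (heig 3) hrepr)⟩

/-- A linear operator on a 3-dimensional Lorentz space having at least four pairwise
non-collinear isotropic eigenvectors is a scalar multiple of the identity. -/
theorem stmt4 {V : Type*} [AddCommGroup V] [Module ℝ V] [FiniteDimensional ℝ V]
    (B : LinearMap.BilinForm ℝ V) (hsymm : ∀ u v, B u v = B v u)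
    (hL : IsLorentzForm 3 B)
    (A : V →ₗ[ℝ] V)
    (b : Fin 4 → V) (mu : Fin 4 → ℝ)
    (hne : ∀ i, b i ≠ 0)
    (hiso : ∀ i, B (b i) (b i) = 0)
    (heig : ∀ i, A (b i) = mu i • b i)
    (hnc : ∀ i j, i ≠ j → LinearIndependent ℝ ![b i, b j]) :
    ∃ c : ℝ, ∀ v : V, A v = c • v :=
  stmt4_general B hsymm hL A b mu hiso heig hnc
end

section
/- The de Sitter space has no nonzero lightlike Killing field: every Killing field X on dS^d = {x ∈ R^{1,d} : q(x) = 1} with ⟨X(p),X(p)⟩ = 0 for all p is identically zero. -/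
def mink (d : ℕ) (u v : Fin (d + 1) → ℝ) : ℝ :=
  ∑ i : Fin (d + 1), (if (i : ℕ) = 0 then (-1 : ℝ) else 1) * u i * v i

lemma mink_add_left (d : ℕ) (u v w : Fin (d+1) → ℝ) :
    mink d (u + v) w = mink d u w + mink d v w := by
  simp [mink, mul_add, add_mul, Finset.sum_add_distrib]

lemma mink_smul_left (d : ℕ) (t : ℝ) (u w : Fin (d+1) → ℝ) :
    mink d (t • u) w = t * mink d u w := by
  simp [mink, Finset.mul_sum]; ring_nf

lemma mink_add_right (d : ℕ) (u v w : Fin (d+1) → ℝ) :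
    mink d u (v + w) = mink d u v + mink d u w := by
  simp [mink, mul_add, add_mul, Finset.sum_add_distrib]

lemma mink_smul_right (d : ℕ) (t : ℝ) (u w : Fin (d+1) → ℝ) :
    mink d u (t • w) = t * mink d u w := by
  simp [mink, Finset.mul_sum]; ring_nf
  exact Finset.sum_congr rfl fun i _ => by ring

lemma mink_comm (d : ℕ) (u v : Fin (d+1) → ℝ) : mink d u v = mink d v u := by
  unfold mink; exact Finset.sum_congr rfl fun i _ => by ring

lemma mink_single (d : ℕ) (j : Fin (d+1)) (v : Fin (d+1) → ℝ) :
    mink d (Pi.single j 1) v = (if (j : ℕ) = 0 then (-1:ℝ) else 1) * v j := by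
  unfold mink
  rw [Finset.sum_eq_single j]
  · simp
  · intro i _ hij; simp [Pi.single_apply, hij]
  · simp

/-- De Sitter space `dS^d = {q = 1} ⊂ ℝ^{1,d}` has no nonzero lightlike Killing
field: if `A ∈ o(1,d)` and the linear field `p ↦ A p` is isotropic at every point of
the quadric `{q = 1}`, then `A = 0`. -/
theorem stmt12 (d : ℕ) (hd : 1 ≤ d)
    (A : (Fin (d + 1) → ℝ) →ₗ[ℝ] (Fin (d + 1) → ℝ))
    (hskew : ∀ u v, mink d (A u) v + mink d u (A v) = 0)
    (hlight : ∀ p, mink d p p = 1 → mink d (A p) (A p) = 0) :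
    A = 0 := by
  -- lightlike on all spacelike vectors
  have key : ∀ u, 0 < mink d u u → mink d (A u) (A u) = 0 := by
    intro u hu
    set s := mink d u u with hs
    have hsq : Real.sqrt s ≠ 0 := ne_of_gt (Real.sqrt_pos.mpr hu)
    set c : ℝ := (Real.sqrt s)⁻¹ with hc
    have hcc : c * c * s = 1 := by
      rw [hc, ← mul_inv]
      rw [Real.mul_self_sqrt hu.le]
      field_simp
    have h1 : mink d (c • u) (c • u) = 1 := by
      rw [mink_smul_left, mink_comm, mink_smul_left, mink_comm d u u, ← hs]
      ring_nf
      ring_nf at hcc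
      linarith
    have h2 := hlight _ h1
    rw [map_smul, mink_smul_left, mink_comm, mink_smul_left] at h2
    have hc0 : c ≠ 0 := inv_ne_zero hsq
    have := mul_ne_zero hc0 hc0
    rcases mul_eq_zero.mp h2 with h | h
    · exact (hc0 h).elim
    · rcases mul_eq_zero.mp h with h' | h'
      · exact (hc0 h').elim
      · rw [mink_comm]; exact h'
  -- bilinear expansion
  have expand : ∀ (t : ℝ) (u w : Fin (d+1) → ℝ),
      mink d (u + t • w) (u + t • w)
        = mink d u u + 2*t*(mink d u w) + t*t*(mink d w w) := by
    intro t u w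
    simp only [mink_add_left, mink_add_right, mink_smul_left, mink_smul_right,
      mink_comm d w u]
    ring
  set e : Fin (d+1) → (Fin (d+1) → ℝ) := fun j => Pi.single j 1 with he
  let i0 : Fin (d+1) := ⟨0, by omega⟩
  let i1 : Fin (d+1) := ⟨1, by omega⟩
  have hi0 : (i0 : ℕ) = 0 := rfl
  have hi1 : (i1 : ℕ) = 1 := rfl
  have hee : ∀ j k : Fin (d+1), mink d (e j) (e k)
      = (if (j : ℕ) = 0 then (-1:ℝ) else 1) * (if j = k then 1 else 0) := by
    intro j k
    rw [he]
    simp only [mink_single, Pi.single_apply]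
  have he00 : mink d (e i0) (e i0) = -1 := by rw [hee]; simp [hi0]
  have he11 : mink d (e i1) (e i1) = 1 := by rw [hee]; simp [hi1]
  have he01 : mink d (e i0) (e i1) = 0 := by
    have hne : i0 ≠ i1 := by
      intro h; exact absurd (congrArg Fin.val h) (by simp [hi0, hi1])
    rw [hee]; simp [hne]
  -- skew relations on basis vectors
  have R : ∀ j k : Fin (d+1),
      (if (k : ℕ) = 0 then (-1:ℝ) else 1) * (A (e j)) k
        + (if (j : ℕ) = 0 then (-1:ℝ) else 1) * (A (e k)) j = 0 := by
    intro j k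
    have h := hskew (e j) (e k)
    rw [mink_comm d (A (e j)) (e k)] at h
    rw [he] at h
    simpa only [mink_single] using h
  -- B(e1, e1) = 0
  have B11 : mink d (A (e i1)) (A (e i1)) = 0 := key _ (by rw [he11]; norm_num)
  -- B(e0, e0) = 0 via points e0 + t e1 for t = 2, 3
  have Bt : ∀ t : ℝ, 0 < -1 + 2*t*0 + t*t*1 →
      mink d (A (e i0)) (A (e i0)) + 2*t*(mink d (A (e i0)) (A (e i1))) = 0 := by
    intro t ht
    have hq : mink d (e i0 + t • e i1) (e i0 + t • e i1) = -1 + 2*t*0 + t*t*1 := by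
      rw [expand, he00, he01, he11]
    have h0 := key (e i0 + t • e i1) (by rw [hq]; exact ht)
    rw [map_add, map_smul, expand, B11] at h0
    linarith
  have B00 : mink d (A (e i0)) (A (e i0)) = 0 := by
    have h2 := Bt 2 (by norm_num)
    have h3 := Bt 3 (by norm_num)
    linarith
  -- a null vector with zero time component is zero
  have nullzero : ∀ c : Fin (d+1) → ℝ, c i0 = 0 →
      (∑ i : Fin (d+1), (if (i : ℕ) = 0 then (-1:ℝ) else 1) * c i * c i) = 0 →
      ∀ i, c i = 0 := by
    intro c hc0 hsum i
    have hnn : ∀ i ∈ Finset.univ,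
        0 ≤ (if ((i : Fin (d+1)) : ℕ) = 0 then (-1:ℝ) else 1) * c i * c i := by
      intro i _
      by_cases h : (i : ℕ) = 0
      · have : i = i0 := Fin.ext (by rw [h, hi0])
        simp [this, hc0]
      · rw [if_neg h, one_mul]; exact mul_self_nonneg _
    have := (Finset.sum_eq_zero_iff_of_nonneg hnn).mp hsum i (Finset.mem_univ i)
    by_cases h : (i : ℕ) = 0
    · have : i = i0 := Fin.ext (by rw [h, hi0])
      rw [this, hc0]
    · rw [if_neg h, one_mul] at this
      exact mul_self_eq_zero.mp this
  -- column 0 vanishes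
  have hA00 : (A (e i0)) i0 = 0 := by
    have h := R i0 i0
    rw [hi0] at h; simp at h; linarith
  have col0 : ∀ i, (A (e i0)) i = 0 := nullzero _ hA00 B00
  -- all columns vanish
  have colj : ∀ j i, (A (e j)) i = 0 := by
    intro j i
    have htop : (A (e j)) i0 = 0 := by
      have h := R j i0
      rw [hi0, col0 j] at h
      simp at h
      linarith [h]
    have Bjj : mink d (A (e j)) (A (e j)) = 0 := by
      by_cases hj : (j : ℕ) = 0
      · have : j = i0 := Fin.ext (by rw [hj, hi0])
        rw [this]; exact B00
      · exact hlight _ (by rw [hee]; simp [hj])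
    exact nullzero _ htop Bjj i
  -- conclude A = 0
  refine Module.Basis.ext (Pi.basisFun ℝ (Fin (d+1))) fun j => ?_
  have : A (e j) = 0 := funext fun i => colj j i
  simpa [he, Pi.basisFun_apply] using this
end
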